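/- (Block evolution for η = 0, Phase II; no classification) Let n be odd, ℓ ≥ 2 and 2ℓ < n. For every t ≥ ℓ−1, the iterate Ψ₀^[t](B(n,ℓ)) of the deterministic traffic-majority map with η = 0 is the configuration whose cells in state 1 are exactly the residues (t−ℓ+1+2k) mod n for 0 ≤ k ≤ ℓ−1 (a 01-sequence of ℓ ones moving one cell to the right per step). In particular, for every t ≥ 0 one has Ψ₀^[t](B(n,ℓ)) ≠ e₀: a correct classification never occurs. -/
import Mathlib


/-- A configuration of the ring of `n` cells, each in a state from `Fin 2`. -/
abbrev Config (n : ℕ) := ZMod n → Fin 2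

/-- The 1-block of length `ℓ`. -/
def block (n ℓ : ℕ) : Config n := fun x => if x.val < ℓ then 1 else 0

/-- The constant configuration with all cells in state `σ`. -/
def endSt (n : ℕ) (σ : Fin 2) : Config n := fun _ => σ

/-- The deterministic global map `Ψ₀` of the traffic-majority rule with `η = 0`
(the traffic rule ECA 184): `φ₀(0,0,0)=0, φ₀(0,0,1)=0, φ₀(1,0,0)=1,
φ₀(1,0,1)=1, φ₀(1,1,1)=1, φ₀(0,1,1)=1, φ₀(1,1,0)=0, φ₀(0,1,0)=0`. -/
def psi0 (n : ℕ) (c : Config n) : Config n := fun x =>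
  if c x = 0 then c (x - 1) else c (x + 1)


lemma fin2cases (a : Fin 2) : a = 0 ∨ a = 1 := by
  fin_cases a
  · exact Or.inl rfl
  · exact Or.inr rfl

lemma add_one_val {n : ℕ} [NeZero n] [Fact (1 < n)] (x : ZMod n) (h : x.val + 1 < n) :
    (x + 1).val = x.val + 1 := by
  rw [ZMod.val_add, ZMod.val_one, Nat.mod_eq_of_lt h]

lemma sub_one_val {n : ℕ} [NeZero n] [Fact (1 < n)] (x : ZMod n) (h : x.val ≠ 0) :
    (x - 1).val = x.val - 1 := by
  have h1 : ((x - 1) + 1).val = ((x-1).val + 1) % n := by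
    rw [ZMod.val_add, ZMod.val_one]
  rw [sub_add_cancel] at h1
  have h2 : (x-1).val < n := ZMod.val_lt _
  rcases Nat.lt_or_ge ((x-1).val + 1) n with hlt | hge
  · rw [Nat.mod_eq_of_lt hlt] at h1; omega
  · have : (x-1).val + 1 = n := by omega
    rw [this, Nat.mod_self] at h1; omega

lemma val_eq_iff {n : ℕ} [NeZero n] (x : ZMod n) (m : ℕ) (hm : m < n) :
    x.val = m ↔ x = (m : ZMod n) := by
  constructor
  · intro h; rw [← ZMod.natCast_rightInverse x, h]
  · intro h; rw [h, ZMod.val_cast_of_lt hm]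

lemma phase1 (n ℓ : ℕ) [NeZero n] [Fact (1 < n)] (hℓ2 : 2 ≤ ℓ) (hℓn : 2 * ℓ < n)
    (t : ℕ) (ht : t ≤ ℓ - 1) :
    ∀ x : ZMod n, (psi0 n)^[t] (block n ℓ) x = 1 ↔
      (x.val < ℓ - t ∨ ∃ k < t, x.val = ℓ - t + 1 + 2 * k) := by
  induction t with
  | zero =>
    intro x
    simp only [Function.iterate_zero, id_eq, Nat.sub_zero, block]
    constructor
    · intro h
      left
      by_contra hc
      rw [if_neg (by omega)] at h
      exact absurd h (by decide)
    · rintro (h | ⟨k, hk, _⟩)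
      · rw [if_pos h]
      · omega
  | succ t ih =>
    have ht' : t ≤ ℓ - 1 := by omega
    have hc := ih ht'
    intro x
    rw [Function.iterate_succ_apply']
    set c := (psi0 n)^[t] (block n ℓ) with hcdef
    have hx := hc x
    have hvn : x.val < n := ZMod.val_lt x
    rcases fin2cases (c x) with h0 | h1
    · -- c x = 0
      have hnotQ : ¬ (x.val < ℓ - t ∨ ∃ k < t, x.val = ℓ - t + 1 + 2 * k) := by
        rw [← hx, h0]; decide
      push_neg at hnotQ
      obtain ⟨hge, hne⟩ := hnotQ
      have hv0 : x.val ≠ 0 := by intro h; omega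
      have hpsi : psi0 n c x = c (x - 1) := by
        simp [psi0, h0]
      rw [hpsi, hc (x - 1), sub_one_val x hv0]
      constructor
      · rintro (h | ⟨k, hk, he⟩)
        · right; exact ⟨0, by omega, by omega⟩
        · right; exact ⟨k + 1, by omega, by omega⟩
      · rintro (h | ⟨k, hk, he⟩)
        · omega
        · rcases k with _ | k'
          · left; omega
          · right; exact ⟨k', by omega, by omega⟩
    · -- c x = 1
      have hQ : x.val < ℓ - t ∨ ∃ k < t, x.val = ℓ - t + 1 + 2 * k := hx.mp h1
      have hbound : x.val + 1 < n := by
        rcases hQ with h | ⟨k, hk, he⟩ <;> omega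
      have hpsi : psi0 n c x = c (x + 1) := by
        simp [psi0, h1]
      rw [hpsi, hc (x + 1), add_one_val x hbound]
      rcases hQ with hA | ⟨j, hj, hje⟩
      · constructor
        · rintro (h | ⟨k, hk, he⟩)
          · left; omega
          · exfalso; omega
        · rintro (h | ⟨k, hk, he⟩)
          · left; omega
          · exfalso; omega
      · constructor
        · rintro (h | ⟨k, hk, he⟩)
          · exfalso; clear * - hje hj h ht hℓ2 hℓn; omega
          · exfalso; clear * - hje hj hk he ht hℓ2 hℓn; omega
        · rintro (h | ⟨k, hk, he⟩)
          · exfalso; clear * - hje hj h ht hℓ2 hℓn; omega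
          · exfalso; clear * - hje hj hk he ht hℓ2 hℓn; omega

lemma phase2_step (n ℓ : ℕ) [NeZero n] (hℓ2 : 2 ≤ ℓ) (hℓn : 2 * ℓ < n)
    (a : ℕ) (c : Config n)
    (hc : ∀ x, c x = 1 ↔ ∃ k, k ≤ ℓ - 1 ∧ x = ((a + 2 * k : ℕ) : ZMod n)) :
    ∀ x, psi0 n c x = 1 ↔ ∃ k, k ≤ ℓ - 1 ∧ x = ((a + 1 + 2 * k : ℕ) : ZMod n) := by
  intro x
  by_cases hx1 : c x = 1
  · obtain ⟨k, hk, hxe⟩ := (hc x).mp hx1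
    have hpsi : psi0 n c x = c (x + 1) := by simp [psi0, hx1]
    rw [hpsi]
    have cancel : ∀ b b' : ℕ, b < n → b' < n →
        ((a : ZMod n) + b = (a : ZMod n) + b') → b = b' := by
      intro b b' hb hb' h
      have h2 : ((b : ℕ) : ZMod n) = ((b' : ℕ) : ZMod n) := by
        exact add_left_cancel h
      have := congrArg ZMod.val h2
      rwa [ZMod.val_cast_of_lt hb, ZMod.val_cast_of_lt hb'] at this
    have hL : ¬ (c (x + 1) = 1) := by
      intro h
      obtain ⟨k', hk', he⟩ := (hc _).mp h
      rw [hxe] at he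
      have : ((a : ZMod n) + (2 * k + 1 : ℕ) = (a : ZMod n) + (2 * k' : ℕ)) := by
        push_cast at he ⊢; linear_combination he
      have := cancel _ _ (by omega) (by omega) this
      omega
    have hR : ¬ ∃ k', k' ≤ ℓ - 1 ∧ x = ((a + 1 + 2 * k' : ℕ) : ZMod n) := by
      rintro ⟨k', hk', he⟩
      rw [hxe] at he
      have : ((a : ZMod n) + (2 * k : ℕ) = (a : ZMod n) + (1 + 2 * k' : ℕ)) := by
        push_cast at he ⊢; linear_combination he
      have := cancel _ _ (by omega) (by omega) this
      omega
    exact iff_of_false hL hR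
  · have hx0 : c x = 0 := (fin2cases _).resolve_right hx1
    have hpsi : psi0 n c x = c (x - 1) := by simp [psi0, hx0]
    rw [hpsi, hc (x - 1)]
    constructor
    · rintro ⟨k, hk, he⟩
      refine ⟨k, hk, ?_⟩
      have he' : x = ((a + 2 * k : ℕ) : ZMod n) + 1 := by
        rw [← he]; ring
      rw [he']; push_cast; ring
    · rintro ⟨k, hk, he⟩
      refine ⟨k, hk, ?_⟩
      rw [he]; push_cast; ring

/-- Block evolution for `η = 0`, Phase II; no classification:
for `n` odd, `ℓ ≥ 2`, `2ℓ < n` and `t ≥ ℓ - 1`, the cells of `Ψ₀^[t](B(n,ℓ))`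
in state 1 are exactly the residues `(t + 1 - ℓ) + 2k (mod n)` for
`0 ≤ k ≤ ℓ - 1`; and for every `t ≥ 0` the iterate is different from `e₀`,
so a correct classification never occurs. -/
theorem block_eta_zero_phaseII (n : ℕ) (hn : Odd n) (ℓ : ℕ) (h2 : 2 ≤ ℓ)
    (hℓ : 2 * ℓ < n) :
    (∀ t : ℕ, ℓ - 1 ≤ t → ∀ x : ZMod n,
      ((psi0 n)^[t] (block n ℓ) x = 1 ↔
        ∃ k, k ≤ ℓ - 1 ∧ x = ((t + 1 - ℓ + 2 * k : ℕ) : ZMod n))) ∧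
    (∀ t : ℕ, (psi0 n)^[t] (block n ℓ) ≠ endSt n 0) := by
  haveI : NeZero n := ⟨by omega⟩
  haveI : Fact (1 < n) := ⟨by omega⟩
  have main : ∀ t : ℕ, ℓ - 1 ≤ t → ∀ x : ZMod n,
      ((psi0 n)^[t] (block n ℓ) x = 1 ↔
        ∃ k, k ≤ ℓ - 1 ∧ x = ((t + 1 - ℓ + 2 * k : ℕ) : ZMod n)) := by
    intro t ht
    induction t, ht using Nat.le_induction with
    | base =>
      intro x
      rw [phase1 n ℓ h2 hℓ (ℓ - 1) le_rfl x]
      have ha : ℓ - 1 + 1 - ℓ = 0 := by omega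
      rw [ha]
      have h1 : ℓ - (ℓ - 1) = 1 := by omega
      rw [h1]
      constructor
      · rintro (h | ⟨k, hk, he⟩)
        · refine ⟨0, by omega, ?_⟩
          rw [← val_eq_iff x (0 + 2 * 0) (by omega)]; omega
        · refine ⟨k + 1, by omega, ?_⟩
          rw [← val_eq_iff x (0 + 2 * (k + 1)) (by omega)]; omega
      · rintro ⟨k, hk, he⟩
        have hv : x.val = 0 + 2 * k := (val_eq_iff x _ (by omega)).mpr he
        rcases k with _ | k'
        · left; omega
        · right; exact ⟨k', by omega, by omega⟩
    | succ t ht ih =>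
      have h := phase2_step n ℓ h2 hℓ (t + 1 - ℓ) _ ih
      have hrw : t + 1 - ℓ + 1 = t + 1 + 1 - ℓ := by omega
      rw [hrw] at h
      intro x
      rw [Function.iterate_succ_apply']
      exact h x
  refine ⟨main, ?_⟩
  intro t heq
  rcases Nat.lt_or_ge t (ℓ - 1) with ht | ht
  · have h0 := (phase1 n ℓ h2 hℓ t (by omega) (0 : ZMod n)).mpr
      (Or.inl (by rw [ZMod.val_zero]; omega))
    have := congrFun heq (0 : ZMod n)
    rw [h0] at this
    simp [endSt] at this
  · have h0 := (main t ht ((t + 1 - ℓ + 2 * 0 : ℕ) : ZMod n)).mpr ⟨0, by omega, rfl⟩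
    have := congrFun heq ((t + 1 - ℓ + 2 * 0 : ℕ) : ZMod n)
    rw [h0] at this
    simp [endSt] at this
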